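/- Let d ≥ 1 be a natural number and let F : ℝ → ℝ be a polynomial function of degree at most d. Then there exists a function f : ℝ^d → ℝ satisfying: (multiaffinity) for each index i and all λ, μ ∈ ℝ with λ + μ = 1 and all arguments, f(…, λ·tᵢ + μ·sᵢ, …) = λ·f(…, tᵢ, …) + μ·f(…, sᵢ, …); (symmetry) f(t₁, …, t_d) = f(t_{σ(1)}, …, t_{σ(d)}) for every permutation σ of {1, …, d}; and (diagonal property) f(t, t, …, t) = F(t) for all t ∈ ℝ. -/
import Mathlib


/-- Existence of the polar form (blossom): every polynomial function
`F : ℝ → ℝ` of degree at most `d` admits a symmetric, multiaffine `d`-variate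
function `f` restricting to `F` on the diagonal. -/
theorem polar_form_exists (d : ℕ) (hd : 1 ≤ d) (F : ℝ → ℝ)
    (hF : ∃ P : Polynomial ℝ, P.degree ≤ d ∧ ∀ t : ℝ, F t = P.eval t) :
    ∃ f : (Fin d → ℝ) → ℝ,
      (∀ (i : Fin d) (t : Fin d → ℝ) (a b lam mu : ℝ), lam + mu = 1 →
        f (Function.update t i (lam * a + mu * b)) =
          lam * f (Function.update t i a) + mu * f (Function.update t i b)) ∧
      (∀ (σ : Equiv.Perm (Fin d)) (t : Fin d → ℝ), f (t ∘ σ) = f t) ∧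
      (∀ t : ℝ, f (fun _ => t) = F t) := by
  obtain ⟨P, hPdeg, hPeval⟩ := hF
  refine ⟨fun t => ∑ s : Finset (Fin d),
      (P.coeff s.card / (d.choose s.card : ℝ)) * ∏ i ∈ s, t i, ?_, ?_, ?_⟩
  · intro i t a b lam mu hlm
    rw [Finset.mul_sum, Finset.mul_sum, ← Finset.sum_add_distrib]
    refine Finset.sum_congr rfl fun s _ => ?_
    by_cases hi : i ∈ s
    · rw [Finset.prod_update_of_mem hi, Finset.prod_update_of_mem hi,
        Finset.prod_update_of_mem hi]
      ring
    · rw [Finset.prod_update_of_notMem hi, Finset.prod_update_of_notMem hi,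
        Finset.prod_update_of_notMem hi, ← add_mul, hlm, one_mul]
  · intro σ t
    refine Fintype.sum_equiv σ.finsetCongr _ _ fun s => ?_
    simp only [Equiv.finsetCongr_apply, Finset.card_map, Finset.prod_map,
      Equiv.coe_toEmbedding, Function.comp_apply]
  · intro t
    have hnd : P.natDegree < d + 1 :=
      Nat.lt_succ_of_le (Polynomial.natDegree_le_iff_degree_le.mpr hPdeg)
    rw [hPeval, Polynomial.eval_eq_sum_range' hnd]
    simp only [Finset.prod_const]
    rw [← Finset.powerset_univ,
      Finset.sum_powerset_apply_card (fun k => P.coeff k / (d.choose k : ℝ) * t ^ k),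
      Finset.card_univ, Fintype.card_fin]
    refine Finset.sum_congr rfl fun k hk => ?_
    have hk' : k ≤ d := Nat.lt_succ_iff.mp (Finset.mem_range.mp hk)
    have hC : (d.choose k : ℝ) ≠ 0 := by
      exact_mod_cast (Nat.choose_pos hk').ne'
    rw [nsmul_eq_mul]
    field_simp
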